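/- Let (R,m) be a Noetherian local ring with infinite residue field and let a be an ideal of R of linear type. Then a is a basic ideal, i.e., a has no reduction other than itself. -/

import Mathlib

open Ideal Submodule Polynomial

variable {R : Type*} [CommRing R]

/-- The canonical presentation of the Rees algebra of `span (range g)`,
sending `ξᵢ` to `gᵢ t`. -/
noncomputable def reesPresentation {m : ℕ} (g : Fin m → R) :
    MvPolynomial (Fin m) R →ₐ[R] reesAlgebra (Ideal.span (Set.range g)) :=
  MvPolynomial.aeval fun i =>
    (⟨Polynomial.monomial 1 (g i), reesAlgebra.monomial_mem.mpr (by
        rw [pow_one]; exact Ideal.subset_span ⟨i, rfl⟩)⟩ :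
      reesAlgebra (Ideal.span (Set.range g)))

/-- The ideal of equations of the Rees algebra for the presentation determined by `g`. -/
noncomputable def reesEquations {m : ℕ} (g : Fin m → R) : Ideal (MvPolynomial (Fin m) R) :=
  RingHom.ker (reesPresentation g).toRingHom

/-- The subideal of an ideal of `MvPolynomial` generated by its homogeneous
elements of degree at most `d`. -/
noncomputable def idealUpToDegree {m : ℕ} (Q : Ideal (MvPolynomial (Fin m) R)) (d : ℕ) :
    Ideal (MvPolynomial (Fin m) R) :=
  Ideal.span {P | P ∈ Q ∧ ∃ e ≤ d, MvPolynomial.IsHomogeneous P e}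

/-- An ideal is of linear type if for some (equivalently, every) finite system of
generators, the ideal of equations of the corresponding presentation of the Rees algebra is
generated by its elements of degree (at most) one, i.e. the relation type equals `1`. -/
def Ideal.IsLinearType (a : Ideal R) : Prop :=
  ∃ (m : ℕ) (g : Fin m → R), Ideal.span (Set.range g) = a ∧
    idealUpToDegree (reesEquations g) 1 = reesEquations g

/-- An ideal `b ⊆ a` is a reduction of `a` if `a^(r+1) = b·a^r` for some `r ≥ 0`. -/
def Ideal.IsReduction (b a : Ideal R) : Prop :=
  b ≤ a ∧ ∃ r : ℕ, a ^ (r + 1) = b * a ^ r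

/-!
Write `a = (g₁, …, gₘ)` and let `b ⊆ a` with `a^(r+1) = b a^r`. If `b ≠ a`, there is a nonzero
`R`-linear map `φ : a → R/𝔪`, with `𝔪` maximal, that kills `b`; put `cᵢ = φ(gᵢ)`. Evaluation at
`c` kills every linear form `L` with `L(g) ∈ b`, in particular every linear equation of the Rees
algebra, hence, `a` being of linear type, every equation. Writing `gⱼ^(r+1) ∈ b a^r` as the value
at `g` of a form `P` of degree `r + 1` in the ideal of such linear forms, `Xⱼ^(r+1) - P` is an
equation, so `cⱼ^(r+1) = 0` in the field `R/𝔪`. Thus every `cⱼ` vanishes, so `φ = 0`.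
-/

lemma Submodule.exists_linearMap_ne_zero_le_ker {M : Type*} [AddCommGroup M] [Module R M]
    [Module.Finite R M] {N : Submodule R M} (hN : N ≠ ⊤) :
    ∃ I : Ideal R, I.IsMaximal ∧ ∃ φ : M →ₗ[R] R ⧸ I, φ ≠ 0 ∧ N ≤ LinearMap.ker φ := by
  obtain ⟨N', hN', hNN'⟩ := (eq_top_or_exists_le_coatom N).resolve_left hN
  have := isSimpleModule_iff_isCoatom.mpr hN'
  obtain ⟨I, hI, ⟨e⟩⟩ := isSimpleModule_iff_quot_maximal.mp this
  refine ⟨I, hI, e.toLinearMap ∘ₗ N'.mkQ, fun h => hN'.1 ?_, ?_⟩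
  · rw [← Submodule.ker_mkQ N', ← LinearEquiv.ker_comp e, h, LinearMap.ker_zero]
  · rwa [LinearEquiv.ker_comp, Submodule.ker_mkQ]

section Homogeneous

variable {σ : Type*} {P : MvPolynomial σ R}

lemma aeval_monomial_one_of_isHomogeneous (g : σ → R) {n : ℕ} (hP : P.IsHomogeneous n) :
    MvPolynomial.aeval (fun i => monomial 1 (g i)) P = monomial n (MvPolynomial.aeval g P) := by
  have h_linear : ∀ L ∈ Submodule.span R (Set.range (MvPolynomial.X : σ → MvPolynomial σ R)),
      MvPolynomial.aeval (fun i => monomial 1 (g i)) L = monomial 1 (MvPolynomial.aeval g L) :=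
    fun L hL => LinearMap.eqOn_span'
      (f := (MvPolynomial.aeval (fun i => monomial 1 (g i))).toLinearMap)
      (g := (monomial 1).comp (MvPolynomial.aeval g).toLinearMap)
      (by rintro _ ⟨i, rfl⟩; simp) hL
  rw [← MvPolynomial.mem_homogeneousSubmodule, ← MvPolynomial.homogeneousSubmodule_one_pow,
    MvPolynomial.homogeneousSubmodule_one_eq_span_X] at hP
  induction hP using Submodule.pow_induction_on_left' with
  | algebraMap r => simp
  | add P Q n _ _ hP hQ => simp only [map_add, hP, hQ]
  | mem_mul L hL n P _ hP =>
    rw [map_mul, map_mul, hP, h_linear L hL, monomial_mul_monomial, add_comm]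

lemma aeval_eq_algebraMap_aeval_of_isHomogeneous_zero {S : Type*} [CommRing S] [Algebra R S]
    (g : σ → R) (c : σ → S) (hP : P.IsHomogeneous 0) :
    MvPolynomial.aeval c P = algebraMap R S (MvPolynomial.aeval g P) := by
  rw [← MvPolynomial.totalDegree_zero_iff_isHomogeneous,
    MvPolynomial.totalDegree_eq_zero_iff_eq_C] at hP
  rw [hP]
  simp

end Homogeneous

lemma aeval_linearMap_eq_of_isHomogeneous_one {ι S : Type*} [CommRing S] [Algebra R S]
    {g : ι → R} (φ : Ideal.span (Set.range g) →ₗ[R] S) {L : MvPolynomial ι R}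
    (hL : L.IsHomogeneous 1) (h : MvPolynomial.aeval g L ∈ Ideal.span (Set.range g)) :
    MvPolynomial.aeval (fun i => φ ⟨g i, Ideal.subset_span (Set.mem_range_self i)⟩) L =
      φ ⟨MvPolynomial.aeval g L, h⟩ := by
  rw [← MvPolynomial.mem_homogeneousSubmodule,
    MvPolynomial.homogeneousSubmodule_one_eq_span_X] at hL
  have h_mem : ∀ L ∈ Submodule.span R (Set.range (MvPolynomial.X : ι → MvPolynomial ι R)),
      MvPolynomial.aeval g L ∈ Ideal.span (Set.range g) := by
    rw [Ideal.span_eq_map_homogeneousSubmodule, MvPolynomial.homogeneousSubmodule_one_eq_span_X]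
    exact fun L hL => Submodule.mem_map_of_mem hL
  induction hL using Submodule.span_induction with
  | mem L hL =>
    obtain ⟨i, rfl⟩ := hL
    simp
  | zero => exact (map_zero φ).symm
  | add L L' hL hL' ih ih' =>
    rw [map_add, ih (h_mem L hL), ih' (h_mem L' hL'), ← map_add]
    exact congrArg φ (Subtype.ext (map_add _ L L').symm)
  | smul r L hL ih =>
    rw [map_smul, ih (h_mem L hL), ← map_smul]
    exact congrArg φ (Subtype.ext (map_smul _ r L).symm)

lemma exists_isHomogeneous_of_mem_mul_pow {ι S : Type*} [CommRing S] [Algebra R S]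
    {g : ι → R} {b : Ideal R} (hb : b ≤ Ideal.span (Set.range g)) (c : ι → S)
    (hc : ∀ L : MvPolynomial ι R, L.IsHomogeneous 1 →
      MvPolynomial.aeval g L ∈ b → MvPolynomial.aeval c L = 0)
    {r : ℕ} {x : R} (hx : x ∈ b * Ideal.span (Set.range g) ^ r) :
    ∃ P : MvPolynomial ι R, P.IsHomogeneous (r + 1) ∧
      MvPolynomial.aeval g P = x ∧ MvPolynomial.aeval c P = 0 := by
  suffices b * Ideal.span (Set.range g) ^ r ≤ Submodule.map (MvPolynomial.aeval g).toLinearMap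
      (MvPolynomial.homogeneousSubmodule ι R (r + 1) ⊓
        LinearMap.ker (MvPolynomial.aeval c).toLinearMap) by
    obtain ⟨P, ⟨hP, hcP⟩, rfl⟩ := this hx
    exact ⟨P, hP, rfl, hcP⟩
  refine Submodule.mul_le.mpr fun y hy z hz => ?_
  obtain ⟨L, hL, rfl⟩ := (Ideal.mem_span_iff_exists_isHomogeneous g y).mp (hb hy)
  obtain ⟨M, hM, rfl⟩ := (Ideal.mem_span_pow_iff_exists_isHomogeneous g z).mp hz
  refine ⟨L * M, ⟨?_, ?_⟩, ?_⟩
  · rw [add_comm]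
    exact hL.mul hM
  · simp [hc L hL hy]
  · simp

section ReesEquations

variable {m : ℕ} {g : Fin m → R}

lemma coe_reesPresentation (P : MvPolynomial (Fin m) R) :
    (reesPresentation g P : R[X]) = MvPolynomial.aeval (fun i => monomial 1 (g i)) P := by
  rw [reesPresentation, ← Subalgebra.coe_val, ← AlgHom.comp_apply, MvPolynomial.comp_aeval]
  rfl

lemma mem_reesEquations_iff_of_isHomogeneous {n : ℕ} {P : MvPolynomial (Fin m) R}
    (hP : P.IsHomogeneous n) : P ∈ reesEquations g ↔ MvPolynomial.aeval g P = 0 := by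
  rw [reesEquations, RingHom.mem_ker, AlgHom.toRingHom_eq_coe, RingHom.coe_coe,
    ← ZeroMemClass.coe_eq_zero, coe_reesPresentation, aeval_monomial_one_of_isHomogeneous g hP,
    monomial_eq_zero_iff]

variable {S : Type*} [CommRing S] [Algebra R S]

lemma reesEquations_le_ker_aeval (hQ : idealUpToDegree (reesEquations g) 1 = reesEquations g)
    (c : Fin m → S)
    (hc : ∀ L : MvPolynomial (Fin m) R, L.IsHomogeneous 1 →
      MvPolynomial.aeval g L = 0 → MvPolynomial.aeval c L = 0) :
    reesEquations g ≤ RingHom.ker (MvPolynomial.aeval c) := by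
  rw [← hQ, idealUpToDegree, Ideal.span_le]
  rintro P ⟨hPQ, e, he, hPe⟩
  have hgP := (mem_reesEquations_iff_of_isHomogeneous hPe).mp hPQ
  rw [SetLike.mem_coe, RingHom.mem_ker]
  interval_cases e
  · rw [aeval_eq_algebraMap_aeval_of_isHomogeneous_zero g c hPe, hgP, map_zero]
  · exact hc P hPe hgP

end ReesEquations

lemma eq_zero_of_isReduction {S : Type*} [CommRing S] [Algebra R S] [IsReduced S]
    {m : ℕ} {g : Fin m → R} (hQ : idealUpToDegree (reesEquations g) 1 = reesEquations g)
    {b : Ideal R} (hb : b.IsReduction (Ideal.span (Set.range g))) (c : Fin m → S)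
    (hc : ∀ L : MvPolynomial (Fin m) R, L.IsHomogeneous 1 →
      MvPolynomial.aeval g L ∈ b → MvPolynomial.aeval c L = 0) :
    c = 0 := by
  obtain ⟨hba, r, hr⟩ := hb
  have h_ker := reesEquations_le_ker_aeval hQ c fun L hL hgL => hc L hL (hgL ▸ b.zero_mem)
  funext j
  have hgj : g j ^ (r + 1) ∈ b * Ideal.span (Set.range g) ^ r :=
    hr ▸ Ideal.pow_mem_pow (Ideal.subset_span (Set.mem_range_self j)) _
  obtain ⟨P, hP, hgP, hcP⟩ := exists_isHomogeneous_of_mem_mul_pow hba c hc hgj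
  have h_eq : MvPolynomial.X j ^ (r + 1) - P ∈ reesEquations g := by
    rw [mem_reesEquations_iff_of_isHomogeneous ((MvPolynomial.isHomogeneous_X_pow j _).sub hP),
      map_sub, map_pow, MvPolynomial.aeval_X, hgP, sub_self]
  have h_nil : c j ^ (r + 1) = 0 := by
    simpa [hcP] using h_ker h_eq
  exact IsNilpotent.eq_zero ⟨r + 1, h_nil⟩

theorem stmt1_general {R : Type*} [CommRing R]
    (a : Ideal R) (ha : a.IsLinearType) :
    ∀ b : Ideal R, b.IsReduction a → b = a := by
  obtain ⟨m, g, rfl, hQ⟩ := ha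
  intro b hb
  by_contra hne
  have hb_ne_top : Submodule.comap (Ideal.span (Set.range g)).subtype b ≠ ⊤ := fun h =>
    hne (le_antisymm hb.1 fun x hx => by simpa using h.ge (Submodule.mem_top (x := ⟨x, hx⟩)))
  have : Module.Finite R (Ideal.span (Set.range g)) :=
    Module.Finite.iff_fg.mpr (Submodule.fg_span (Set.finite_range g))
  obtain ⟨I, hI, φ, hφ, hbφ⟩ := Submodule.exists_linearMap_ne_zero_le_ker hb_ne_top
  have hφg := eq_zero_of_isReduction hQ hb (fun i => φ ⟨g i, _⟩) fun L hL hgL => by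
    rw [aeval_linearMap_eq_of_isHomogeneous_one φ hL (hb.1 hgL)]
    exact hbφ hgL
  refine hφ (LinearMap.ext_on Submodule.span_span_coe_preimage ?_)
  rintro ⟨_, hx⟩ ⟨i, rfl⟩
  exact congrFun hφg i

theorem stmt1 {R : Type*} [CommRing R] [IsNoetherianRing R] [IsLocalRing R]
    [Infinite (IsLocalRing.ResidueField R)]
    (a : Ideal R) (ha : a.IsLinearType) :
    ∀ b : Ideal R, b.IsReduction a → b = a :=
  stmt1_general a ha
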